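/- arXiv:2405.11509 — 5 statements merged into one kernel-verified Lean document; each statement's English description precedes it below -/
import Mathlib

section
/- Let X and Y be metric spaces, γ: [a,b] → X a rectifiable curve, and f: X → Y a mapping with ‖f‖_{B₁} = sup_{z∈X} D*f(z) < ∞ (where D*f(z) = limsup_{y→z} d_Y(f(z),f(y))/d_X(z,y)). Then the image curve f ∘ γ is rectifiable and ℓ(f ∘ γ) ≤ ‖f‖_{B₁} · ℓ(γ). -/
open Set Filter Metric ENNReal NNReal

/-- `D* f x`: upper dilation of `f` at `x` (0 at isolated points). -/
noncomputable def Dstar {X Y : Type*} [MetricSpace X] [MetricSpace Y] (f : X → Y) (x : X) :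
    ℝ≥0∞ :=
  Filter.limsup (fun y => edist (f x) (f y) / edist x y) (nhdsWithin x {x}ᶜ)

/-- A curve parametrized on `[0,1]` joining `x` to `y`. -/
def IsCurveFrom {X : Type*} [MetricSpace X] (γ : ℝ → X) (x y : X) : Prop :=
  ContinuousOn γ (Set.Icc 0 1) ∧ γ 0 = x ∧ γ 1 = y

/-- Rectifiability of a curve parametrized on `[0,1]`. -/
def RectifiableCurve {X : Type*} [MetricSpace X] (γ : ℝ → X) : Prop :=
  eVariationOn γ (Set.Icc 0 1) ≠ ⊤

/-- `I` is the curve integral of `g` along `γ : [0,1] → X` (limit of Riemann sums with respect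
to arclength). -/
def IsCurveIntegral {X : Type*} [MetricSpace X] (γ : ℝ → X) (g : X → ℝ) (I : ℝ) : Prop :=
  ∀ ε > 0, ∃ δ > 0, ∀ n : ℕ, ∀ t s : ℕ → ℝ,
    0 < n → t 0 = 0 → t n = 1 →
    (∀ i < n, t i < t (i + 1)) →
    (∀ i < n, t (i + 1) - t i < δ) →
    (∀ i < n, s i ∈ Set.Icc (t i) (t (i + 1))) →
    |I - ∑ i ∈ Finset.range n,
        g (γ (s i)) * (eVariationOn γ (Set.Icc (t i) (t (i + 1)))).toReal| < ε

/-- The weighted distance `d_w`. -/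
noncomputable def wDist {X : Type*} [MetricSpace X] (w : X → ℝ) (x y : X) : ℝ :=
  sInf {I | ∃ γ : ℝ → X, IsCurveFrom γ x y ∧ RectifiableCurve γ ∧ IsCurveIntegral γ w I}

/-- The inner (length) distance `d₁`. -/
noncomputable def innerDist {Y : Type*} [MetricSpace Y] (u v : Y) : ℝ :=
  sInf {L | ∃ δ : ℝ → Y, IsCurveFrom δ u v ∧ eVariationOn δ (Set.Icc 0 1) = ENNReal.ofReal L}

/-- The class `RO^K_w(X,Y)` of regularly oscillating mappings. -/
def RegOsc {X Y : Type*} [MetricSpace X] [MetricSpace Y] (w : X → ℝ) (K : ℝ) (f : X → Y) :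
    Prop :=
  (∀ x, Dstar f x ≠ ⊤) ∧
  (∀ x : X, ∀ r : ℝ, 0 < r → r < w x → Bornology.IsBounded (f '' Metric.ball x r)) ∧
  (∀ x : X, ∀ r : ℝ, 0 < r → r < w x →
    Dstar f x ≤ ENNReal.ofReal ((K / r) * ⨆ y : Metric.ball x r, dist (f x) (f y)))

/-! Strictly above `‖f‖_{B₁}`, any `C` bounds `d(f x, f y) ≤ C d(x, y)` for `y` near each `x`.
Composed with the continuous curve `γ`, this local bound at every parameter upgrades, by continuous
induction along `[s, t]`, to `d(f (γ s), f (γ t)) ≤ C ℓ(γ|[s, t])`; summing over a partition bounds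
`ℓ(f ∘ γ)` by `C ℓ(γ)`, and letting `C` decrease to `‖f‖_{B₁}` gives the claim. -/

open Topology

section CurveImage

variable {E F : Type*} [PseudoEMetricSpace E] [PseudoEMetricSpace F] {γ : ℝ → E} {g : ℝ → F}
  {C : ℝ≥0∞}

lemma edist_le_mul_eVariationOn_Icc_of_step {s u v : ℝ} (hsu : s ≤ u) (huv : u ≤ v)
    (hs : edist (g s) (g u) ≤ C * eVariationOn γ (Icc s u))
    (hu : edist (g u) (g v) ≤ C * edist (γ u) (γ v)) :
    edist (g s) (g v) ≤ C * eVariationOn γ (Icc s v) :=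
  calc edist (g s) (g v) ≤ edist (g s) (g u) + edist (g u) (g v) := edist_triangle _ _ _
    _ ≤ C * eVariationOn γ (Icc s u) + C * eVariationOn γ (Icc u v) := by
      gcongr
      exact hu.trans (mul_le_mul_right
        (eVariationOn.edist_le γ (left_mem_Icc.2 huv) (right_mem_Icc.2 huv)) C)
    _ = C * eVariationOn γ (Icc s v) := by
      rw [← mul_add]
      simpa only [univ_inter] using
        congrArg (C * ·) (eVariationOn.Icc_add_Icc γ hsu huv (mem_univ u))

/-- Continuous induction: the set of `u` for which the bound holds on `[s, u]` contains its
supremum (reach it from the left through the local bound at the supremum), and that supremum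
cannot lie below `t` (step past it to the right through the same local bound). -/
lemma edist_le_mul_eVariationOn_Icc_of_eventually {s t : ℝ} (hst : s ≤ t)
    (hloc : ∀ u ∈ Icc s t, ∀ᶠ v in 𝓝[Icc s t] u, edist (g u) (g v) ≤ C * edist (γ u) (γ v)) :
    edist (g s) (g t) ≤ C * eVariationOn γ (Icc s t) := by
  set A := {u ∈ Icc s t | edist (g s) (g u) ≤ C * eVariationOn γ (Icc s u)}
  have hsA : s ∈ A := ⟨left_mem_Icc.2 hst, by simp⟩
  have hA : IsLUB A (sSup A) := isLUB_csSup ⟨s, hsA⟩ ⟨t, fun u hu => hu.1.2⟩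
  set c := sSup A
  have hc : c ∈ Icc s t := ⟨hA.1 hsA, hA.2 fun u hu => hu.1.2⟩
  have hcA : c ∈ A := by
    obtain ⟨u, huA, hu⟩ := ((hA.frequently_mem ⟨s, hsA⟩).and_eventually
      ((eventually_nhdsWithin_iff.1 (hloc c hc)).filter_mono nhdsWithin_le_nhds)).exists
    refine ⟨hc, edist_le_mul_eVariationOn_Icc_of_step huA.1.1 (hA.1 huA) huA.2 ?_⟩
    rw [edist_comm, edist_comm (γ u)]
    exact hu huA.1
  rcases hc.2.eq_or_lt with hct | hct
  · exact hct ▸ hcA.2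
  · have := left_nhdsWithin_Ioc_neBot hct
    have hsub : Ioc c t ⊆ Icc s t := Ioc_subset_Icc_self.trans (Icc_subset_Icc_left hc.1)
    obtain ⟨v, hv, hcv⟩ :=
      (((hloc c hc).filter_mono (nhdsWithin_mono _ hsub)).and self_mem_nhdsWithin).exists
    have hvA : v ∈ A :=
      ⟨hsub hcv, edist_le_mul_eVariationOn_Icc_of_step hc.1 hcv.1.le hcA.2 hv⟩
    exact absurd (hA.1 hvA) (not_le.2 hcv.1)

lemma eVariationOn_Icc_le_mul_of_eventually {a b : ℝ}
    (hloc : ∀ u ∈ Icc a b, ∀ᶠ v in 𝓝[Icc a b] u, edist (g u) (g v) ≤ C * edist (γ u) (γ v)) :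
    eVariationOn g (Icc a b) ≤ C * eVariationOn γ (Icc a b) := by
  refine iSup_le ?_
  rintro ⟨n, u, hu, hus⟩
  have hsub : ∀ i, Icc (u i) (u (i + 1)) ⊆ Icc a b := fun i => Icc_subset_Icc (hus i).1 (hus _).2
  calc ∑ i ∈ Finset.range n, edist (g (u (i + 1))) (g (u i))
      ≤ ∑ i ∈ Finset.range n, C * eVariationOn γ (Icc (u i) (u (i + 1))) := by
        refine Finset.sum_le_sum fun i _ => ?_
        rw [edist_comm]
        exact edist_le_mul_eVariationOn_Icc_of_eventually (hu i.le_succ) fun v hv =>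
          (hloc v (hsub i hv)).filter_mono (nhdsWithin_mono _ (hsub i))
    _ = C * eVariationOn γ (Icc (u 0) (u n)) := by rw [← Finset.mul_sum, eVariationOn.sum' γ hu]
    _ ≤ C * eVariationOn γ (Icc a b) :=
        mul_le_mul_right (eVariationOn.mono γ (Icc_subset_Icc (hus 0).1 (hus n).2)) C

end CurveImage

lemma eventually_edist_le_of_Dstar_lt {X Y : Type*} [MetricSpace X] [MetricSpace Y] {f : X → Y}
    {x : X} {C : ℝ≥0∞} (h : Dstar f x < C) : ∀ᶠ y in 𝓝 x, edist (f x) (f y) ≤ C * edist x y := by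
  filter_upwards [eventually_nhdsWithin_iff.1 (eventually_lt_of_limsup_lt h)] with y hy
  rcases eq_or_ne y x with rfl | hyx
  · simp
  · exact (ENNReal.div_le_iff (edist_pos.2 hyx.symm).ne' (edist_ne_top x y)).1 (hy hyx).le

theorem length_image_le_general {X Y : Type*} [MetricSpace X] [MetricSpace Y]
    (a b : ℝ) (γ : ℝ → X)
    (hγc : ContinuousOn γ (Set.Icc a b))
    (hrect : eVariationOn γ (Set.Icc a b) ≠ ⊤)
    (f : X → Y) (hf : (⨆ z : X, Dstar f z) ≠ ⊤) :
    eVariationOn (f ∘ γ) (Set.Icc a b) ≠ ⊤ ∧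
    eVariationOn (f ∘ γ) (Set.Icc a b) ≤
      (⨆ z : X, Dstar f z) * eVariationOn γ (Set.Icc a b) := by
  have hle : eVariationOn (f ∘ γ) (Icc a b) ≤ (⨆ z, Dstar f z) * eVariationOn γ (Icc a b) := by
    refine ENNReal.le_mul_of_forall_lt (.inr hrect) (.inl hf) fun C hC W hW => ?_
    refine (eVariationOn_Icc_le_mul_of_eventually fun u hu => ?_).trans (mul_le_mul_right hW.le C)
    exact (hγc u hu).eventually
      (eventually_edist_le_of_Dstar_lt ((le_iSup (Dstar f) (γ u)).trans_lt hC))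
  exact ⟨ne_top_of_le_ne_top (ENNReal.mul_ne_top hf hrect) hle, hle⟩

theorem length_image_le {X Y : Type*} [MetricSpace X] [MetricSpace Y]
    (a b : ℝ) (hab : a ≤ b) (γ : ℝ → X)
    (hγc : ContinuousOn γ (Set.Icc a b))
    (hrect : eVariationOn γ (Set.Icc a b) ≠ ⊤)
    (f : X → Y) (hf : (⨆ z : X, Dstar f z) ≠ ⊤) :
    eVariationOn (f ∘ γ) (Set.Icc a b) ≠ ⊤ ∧
    eVariationOn (f ∘ γ) (Set.Icc a b) ≤
      (⨆ z : X, Dstar f z) * eVariationOn γ (Set.Icc a b) :=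
  length_image_le_general a b γ hγc hrect f hf
end

section
/- Let X, Y be metric spaces and suppose there is M > 0 such that any two points x, y ∈ X are joined by a rectifiable curve γ with ∫_γ w ≤ M·φ(d_X(x,y)), where φ is continuous at 0 with φ(0) = 0 and Y is complete. Then every f ∈ B_w(X,Y) (i.e. D*f(z) ≤ C·w(z) on X) extends continuously to the completion of X. -/
/-!
If `D*f(z) < C w(z) + ε`, then `f` is Lipschitz with constant `C w(z) + ε` on a neighbourhood of
`z`. Along a rectifiable curve `γ` from `x` to `y`, Cousin's lemma yields a partition of the
parameter interval, fine enough for these local bounds at the tags and for the Riemann sums of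
`∫_γ w`; chaining the local bounds over the pieces, each controlled by the length of its piece,
gives `d(f x, f y) ≤ C ∫_γ w + ε · length γ`. Hence `d(f x, f y) ≤ C M φ(d(x, y))`, so `f` is
uniformly continuous, and it extends to the completion because `Y` is complete.
-/

open Set Filter Metric ENNReal NNReal

open Topology

/-- Only `t 0, …, t n` and `s 0, …, s (n - 1)` matter; `t` is required to be monotone on all of `ℕ`
so that `eVariationOn.sum'` applies. -/
structure IsFineTaggedPartition (δ : ℝ → ℝ) (a b : ℝ) (n : ℕ) (t s : ℕ → ℝ) : Prop where
  first : t 0 = a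
  last : t n = b
  mono : Monotone t
  lt_succ : ∀ i < n, t i < t (i + 1)
  tag_mem : ∀ i < n, s i ∈ Icc (t i) (t (i + 1))
  fine_left : ∀ i < n, s i - δ (s i) < t i
  fine_right : ∀ i < n, t (i + 1) < s i + δ (s i)

namespace IsFineTaggedPartition

variable {δ : ℝ → ℝ} {a b : ℝ} {n : ℕ} {t s : ℕ → ℝ}

lemma nil (δ : ℝ → ℝ) (a : ℝ) : IsFineTaggedPartition δ a a 0 (fun _ => a) (fun _ => a) where
  first := rfl
  last := rfl
  mono := monotone_const
  lt_succ := by simp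
  tag_mem := by simp
  fine_left := by simp
  fine_right := by simp

lemma snoc (p : IsFineTaggedPartition δ a b n t s) {c τ : ℝ} (hbc : b < c) (hτ : τ ∈ Icc b c)
    (hleft : τ - δ τ < b) (hright : c < τ + δ τ) :
    IsFineTaggedPartition δ a c (n + 1) (fun i => if i ≤ n then t i else c)
      (fun i => if i < n then s i else τ) := by
  have step : ∀ {P : ℕ → Prop} (hP : ∀ i < n, P i) (hn : P n), ∀ i < n + 1, P i :=
    fun hP hn i hi => (Nat.lt_succ_iff_lt_or_eq.1 hi).elim (hP i) (· ▸ hn)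
  refine ⟨by simp [p.first], by simp, monotone_nat_of_le_succ fun i => ?_, step ?_ ?_,
    step ?_ ?_, step ?_ ?_, step ?_ ?_⟩
  · rcases lt_trichotomy i n with hi | rfl | hi
    · simp [hi.le, Nat.succ_le_of_lt hi, p.mono (Nat.le_succ i)]
    · simp [p.last, hbc.le]
    · simp [hi.not_ge, (hi.trans (Nat.lt_succ_self i)).not_ge]
  · intro i hi; simpa [hi.le, Nat.succ_le_of_lt hi] using p.lt_succ i hi
  · simpa [p.last] using hbc
  · intro i hi; simpa [hi, hi.le, Nat.succ_le_of_lt hi] using p.tag_mem i hi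
  · simpa [p.last] using hτ
  · intro i hi; simpa [hi, hi.le] using p.fine_left i hi
  · simpa [p.last] using hleft
  · intro i hi; simpa [hi, Nat.succ_le_of_lt hi] using p.fine_right i hi
  · simpa using hright

lemma mem_Icc (p : IsFineTaggedPartition δ a b n t s) {i : ℕ} (hi : i ≤ n) : t i ∈ Icc a b :=
  ⟨p.first ▸ p.mono (Nat.zero_le i), p.last ▸ p.mono hi⟩

lemma tag_mem_Icc (p : IsFineTaggedPartition δ a b n t s) {i : ℕ} (hi : i < n) :
    s i ∈ Icc a b :=
  ⟨(p.mem_Icc hi.le).1.trans (p.tag_mem i hi).1, (p.tag_mem i hi).2.trans (p.mem_Icc hi).2⟩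

lemma sum_eVariationOn {E : Type*} [PseudoEMetricSpace E] (p : IsFineTaggedPartition δ a b n t s)
    (γ : ℝ → E) :
    ∑ i ∈ Finset.range n, eVariationOn γ (Icc (t i) (t (i + 1))) = eVariationOn γ (Icc a b) := by
  rw [eVariationOn.sum' γ p.mono, p.first, p.last]

end IsFineTaggedPartition

/-- Cousin's lemma. -/
theorem exists_isFineTaggedPartition {δ : ℝ → ℝ} {a b : ℝ} (hδ : ∀ x ∈ Icc a b, 0 < δ x)
    (hab : a ≤ b) : ∃ n t s, IsFineTaggedPartition δ a b n t s := by
  set S := {x ∈ Icc a b | ∃ n t s, IsFineTaggedPartition δ a x n t s}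
  have haS : a ∈ S := ⟨left_mem_Icc.2 hab, 0, _, _, .nil δ a⟩
  have hS : BddAbove S := ⟨b, fun x hx => hx.1.2⟩
  set c := sSup S
  have hc : c ∈ Icc a b := ⟨le_csSup hS haS, csSup_le ⟨a, haS⟩ fun x hx => hx.1.2⟩
  have hδc := hδ c hc
  obtain ⟨x, hxS, hxc⟩ := exists_lt_of_lt_csSup ⟨a, haS⟩ (sub_lt_self c hδc)
  have hxc' : x ≤ c := le_csSup hS hxS
  set y := min b (c + δ c / 2)
  have hcy : c ≤ y := le_min hc.2 (by linarith)
  -- `[x, y]` fits in the `δ c`-neighbourhood of `c`, so a partition of `[a, x]` extends to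
  -- `[a, y]` with tag `c`.
  have hyS : y ∈ S := by
    rcases lt_or_ge x y with hxy | hyx
    · obtain ⟨n, t, s, p⟩ := hxS.2
      have hyδ : y < c + δ c := (min_le_right _ _).trans_lt (by linarith)
      exact ⟨⟨hxS.1.1.trans hxy.le, min_le_left _ _⟩, _, _, _, p.snoc hxy ⟨hxc', hcy⟩ hxc hyδ⟩
    · rwa [le_antisymm hyx (hxc'.trans hcy)]
  have hbc : b ≤ c := (min_le_iff.1 (le_csSup hS hyS)).resolve_right fun h => by linarith
  rw [← le_antisymm (min_le_left b _) (hbc.trans hcy)]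
  exact hyS.2

lemma edist_add_edist_le_eVariationOn {E : Type*} [PseudoEMetricSpace E] (γ : ℝ → E) {a s b : ℝ}
    (hs : s ∈ Icc a b) :
    edist (γ s) (γ a) + edist (γ s) (γ b) ≤ eVariationOn γ (Icc a b) :=
  calc edist (γ s) (γ a) + edist (γ s) (γ b)
      ≤ eVariationOn γ (Icc a s) + eVariationOn γ (Icc s b) :=
        add_le_add (eVariationOn.edist_le γ (right_mem_Icc.2 hs.1) (left_mem_Icc.2 hs.1))
          (eVariationOn.edist_le γ (left_mem_Icc.2 hs.2) (right_mem_Icc.2 hs.2))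
    _ = eVariationOn γ (Icc a b) := by
        simpa using eVariationOn.Icc_add_Icc γ hs.1 hs.2 (mem_univ s)

section

variable {X Y : Type*} [PseudoMetricSpace X] [PseudoMetricSpace Y]

lemma dist_le_mul_eVariationOn {F : ℝ → Y} {γ : ℝ → X} {a s b c : ℝ} (hs : s ∈ Icc a b)
    (hfin : eVariationOn γ (Icc a b) ≠ ⊤) (hc : 0 ≤ c)
    (ha : dist (F s) (F a) ≤ c * dist (γ s) (γ a)) (hb : dist (F s) (F b) ≤ c * dist (γ s) (γ b)) :
    dist (F a) (F b) ≤ c * (eVariationOn γ (Icc a b)).toReal :=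
  calc dist (F a) (F b) ≤ dist (F s) (F a) + dist (F s) (F b) := dist_triangle_left _ _ _
    _ ≤ c * (dist (γ s) (γ a) + dist (γ s) (γ b)) := by rw [mul_add]; exact add_le_add ha hb
    _ ≤ c * (eVariationOn γ (Icc a b)).toReal := by
        gcongr
        rw [dist_edist, dist_edist, ← ENNReal.toReal_add (edist_ne_top _ _) (edist_ne_top _ _)]
        exact ENNReal.toReal_mono hfin (edist_add_edist_le_eVariationOn γ hs)

lemma IsFineTaggedPartition.dist_le_sum {δ : ℝ → ℝ} {a b : ℝ} {n : ℕ} {t s : ℕ → ℝ}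
    (p : IsFineTaggedPartition δ a b n t s) {F : ℝ → Y} {γ : ℝ → X} {c : ℝ → ℝ}
    (hfin : eVariationOn γ (Icc a b) ≠ ⊤) (hc : ∀ τ ∈ Icc a b, 0 ≤ c τ)
    (hloc : ∀ τ ∈ Icc a b, ∀ u ∈ Icc a b, |u - τ| < δ τ →
      dist (F τ) (F u) ≤ c τ * dist (γ τ) (γ u)) :
    dist (F a) (F b) ≤
      ∑ i ∈ Finset.range n, c (s i) * (eVariationOn γ (Icc (t i) (t (i + 1)))).toReal := by
  calc dist (F a) (F b) = dist (F (t 0)) (F (t n)) := by rw [p.first, p.last]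
    _ ≤ ∑ i ∈ Finset.range n, dist (F (t i)) (F (t (i + 1))) :=
        dist_le_range_sum_dist (fun i => F (t i)) n
    _ ≤ _ := Finset.sum_le_sum fun i hi => ?_
  have hi := Finset.mem_range.1 hi
  have hs := p.tag_mem_Icc hi
  have hsub : Icc (t i) (t (i + 1)) ⊆ Icc a b := Icc_subset_Icc (p.mem_Icc hi.le).1 (p.mem_Icc hi).2
  refine dist_le_mul_eVariationOn (p.tag_mem i hi)
    (ne_top_of_le_ne_top hfin (eVariationOn.mono γ hsub)) (hc _ hs)
    (hloc _ hs _ (p.mem_Icc hi.le) ?_) (hloc _ hs _ (p.mem_Icc hi) ?_) <;>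
  rw [abs_sub_lt_iff] <;>
  constructor <;>
  linarith [p.fine_left i hi, p.fine_right i hi, (p.tag_mem i hi).1, (p.tag_mem i hi).2]

lemma uniformContinuous_of_dist_le {f : X → Y} {ψ : ℝ → ℝ} (hψ : Tendsto ψ (𝓝[≥] 0) (𝓝 0))
    (h : ∀ x y, dist (f x) (f y) ≤ ψ (dist x y)) : UniformContinuous f := by
  refine Metric.uniformContinuous_iff.2 fun ε hε => ?_
  obtain ⟨δ, hδ, hψδ⟩ := Metric.mem_nhdsWithin_iff.1 (hψ.eventually (gt_mem_nhds hε))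
  refine ⟨δ, hδ, fun {x y} hxy => (h x y).trans_lt (hψδ ⟨?_, dist_nonneg⟩)⟩
  rwa [mem_ball, Real.dist_eq, sub_zero, abs_of_nonneg dist_nonneg]

end

section

variable {X Y : Type*} [MetricSpace X] [MetricSpace Y]

lemma eventually_dist_le_of_Dstar_lt {f : X → Y} {x : X} {c : ℝ}
    (hD : Dstar f x < ENNReal.ofReal c) : ∀ᶠ y in 𝓝 x, dist (f x) (f y) ≤ c * dist x y := by
  have hc : 0 ≤ c := (ENNReal.ofReal_pos.1 (hD.trans_le' bot_le)).le
  filter_upwards [eventually_nhdsWithin_iff.1 (eventually_lt_of_limsup_lt hD)] with y hy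
  rcases eq_or_ne y x with rfl | hyx
  · simp
  · have := (ENNReal.div_le_iff ((edist_pos.2 hyx.symm).ne') (edist_ne_top x y)).1 (hy hyx).le
    rw [edist_dist, edist_dist, ← ENNReal.ofReal_mul hc] at this
    exact (ENNReal.ofReal_le_ofReal_iff (by positivity)).1 this

lemma exists_pos_dist_comp_le_of_Dstar_lt {f : X → Y} {γ : ℝ → X} {S : Set ℝ} {τ c : ℝ}
    (hγ : ContinuousWithinAt γ S τ) (hD : Dstar f (γ τ) < ENNReal.ofReal c) :
    ∃ ρ > 0, ∀ u ∈ S, |u - τ| < ρ → dist (f (γ τ)) (f (γ u)) ≤ c * dist (γ τ) (γ u) := by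
  obtain ⟨ρ, hρ, h⟩ :=
    Metric.mem_nhdsWithin_iff.1 (hγ.tendsto.eventually (eventually_dist_le_of_Dstar_lt hD))
  exact ⟨ρ, hρ, fun u hu hdu => h ⟨by rwa [mem_ball, Real.dist_eq], hu⟩⟩

theorem dist_le_mul_add_of_isCurveIntegral {f : X → Y} {w : X → ℝ} {C I ε : ℝ} {γ : ℝ → X}
    (hγ : ContinuousOn γ (Icc 0 1)) (hrect : RectifiableCurve γ) (hI : IsCurveIntegral γ w I)
    (hC : 0 ≤ C) (hw : ∀ τ ∈ Icc (0 : ℝ) 1, 0 ≤ w (γ τ))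
    (hB : ∀ τ ∈ Icc (0 : ℝ) 1, Dstar f (γ τ) ≤ ENNReal.ofReal (C * w (γ τ))) (hε : 0 < ε) :
    dist (f (γ 0)) (f (γ 1)) ≤ C * (I + ε) + ε * (eVariationOn γ (Icc 0 1)).toReal := by
  obtain ⟨η, hη, hRiemann⟩ := hI ε hε
  have hloc : ∀ τ, ∃ ρ > 0, τ ∈ Icc (0 : ℝ) 1 → ∀ u ∈ Icc (0 : ℝ) 1, |u - τ| < ρ →
      dist (f (γ τ)) (f (γ u)) ≤ (C * w (γ τ) + ε) * dist (γ τ) (γ u) := by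
    intro τ
    by_cases hτ : τ ∈ Icc (0 : ℝ) 1
    · have hpos : 0 < C * w (γ τ) + ε := add_pos_of_nonneg_of_pos (mul_nonneg hC (hw τ hτ)) hε
      obtain ⟨ρ, hρ, h⟩ := exists_pos_dist_comp_le_of_Dstar_lt (hγ τ hτ) ((hB τ hτ).trans_lt
        ((ENNReal.ofReal_lt_ofReal_iff hpos).2 (lt_add_of_pos_right _ hε)))
      exact ⟨ρ, hρ, fun _ => h⟩
    · exact ⟨1, one_pos, fun h => (hτ h).elim⟩
  choose ρ hρ hρloc using hloc
  -- The gauge serves both the local bounds at the tags and the mesh `η` of the Riemann sums.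
  obtain ⟨n, t, s, p⟩ := exists_isFineTaggedPartition (δ := fun τ => min (ρ τ) (η / 2))
    (fun τ _ => lt_min (hρ τ) (half_pos hη)) zero_le_one
  have hn : 0 < n := Nat.pos_of_ne_zero fun h => by simpa [h, p.first] using p.last
  have hmesh : ∀ i < n, t (i + 1) - t i < η := fun i hi => by
    linarith [p.fine_left i hi, p.fine_right i hi, min_le_right (ρ (s i)) (η / 2)]
  have hsum := abs_lt.1 (hRiemann n t s hn p.first p.last p.lt_succ hmesh p.tag_mem)
  have hfin (i : ℕ) (hi : i ∈ Finset.range n) : eVariationOn γ (Icc (t i) (t (i + 1))) ≠ ⊤ :=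
    ne_top_of_le_ne_top hrect <| eVariationOn.mono γ <| Icc_subset_Icc
      (p.mem_Icc (Finset.mem_range.1 hi).le).1 (p.mem_Icc (Finset.mem_range.1 hi)).2
  calc dist (f (γ 0)) (f (γ 1))
      ≤ ∑ i ∈ Finset.range n, (C * w (γ (s i)) + ε) *
          (eVariationOn γ (Icc (t i) (t (i + 1)))).toReal :=
        p.dist_le_sum (F := f ∘ γ) hrect (fun τ hτ => by linarith [mul_nonneg hC (hw τ hτ)])
          fun τ hτ u hu h => hρloc τ hτ u hu (h.trans_le (min_le_left _ _))
    _ = C * ∑ i ∈ Finset.range n, w (γ (s i)) * (eVariationOn γ (Icc (t i) (t (i + 1)))).toReal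
        + ε * (∑ i ∈ Finset.range n, eVariationOn γ (Icc (t i) (t (i + 1)))).toReal := by
        simp only [ENNReal.toReal_sum hfin, add_mul, Finset.sum_add_distrib, Finset.mul_sum,
          mul_assoc]
    _ ≤ C * (I + ε) + ε * (eVariationOn γ (Icc 0 1)).toReal := by
        rw [p.sum_eVariationOn]
        gcongr
        linarith

theorem dist_le_mul_of_isCurveIntegral {f : X → Y} {w : X → ℝ} {C I : ℝ} {γ : ℝ → X}
    (hγ : ContinuousOn γ (Icc 0 1)) (hrect : RectifiableCurve γ) (hI : IsCurveIntegral γ w I)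
    (hC : 0 ≤ C) (hw : ∀ τ ∈ Icc (0 : ℝ) 1, 0 ≤ w (γ τ))
    (hB : ∀ τ ∈ Icc (0 : ℝ) 1, Dstar f (γ τ) ≤ ENNReal.ofReal (C * w (γ τ))) :
    dist (f (γ 0)) (f (γ 1)) ≤ C * I := by
  set V := (eVariationOn γ (Icc 0 1)).toReal
  have hlim : Tendsto (fun ε => C * (I + ε) + ε * V) (𝓝[>] 0) (𝓝 (C * I)) := by
    have hcont : Continuous fun ε => C * (I + ε) + ε * V := by fun_prop
    simpa using (hcont.tendsto 0).mono_left nhdsWithin_le_nhds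
  exact ge_of_tendsto hlim <| eventually_nhdsWithin_of_forall fun ε hε =>
    dist_le_mul_add_of_isCurveIntegral hγ hrect hI hC hw hB hε

theorem uniformContinuous_of_Dstar_le {f : X → Y} {w : X → ℝ} {C M : ℝ} {φ : ℝ → ℝ}
    (hw : ∀ x, 0 ≤ w x) (hB : ∀ z, Dstar f z ≤ ENNReal.ofReal (C * w z))
    (hφ : Tendsto φ (𝓝[≥] 0) (𝓝 0))
    (hcurve : ∀ x y : X, ∃ γ : ℝ → X, ∃ I : ℝ, IsCurveFrom γ x y ∧ RectifiableCurve γ ∧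
      IsCurveIntegral γ w I ∧ I ≤ M * φ (dist x y)) :
    UniformContinuous f := by
  set C' := max C 0
  have hC' : 0 ≤ C' := le_max_right C 0
  have hB' (z : X) : Dstar f z ≤ ENNReal.ofReal (C' * w z) :=
    (hB z).trans (ENNReal.ofReal_le_ofReal (mul_le_mul_of_nonneg_right (le_max_left C 0) (hw z)))
  refine uniformContinuous_of_dist_le (ψ := fun r => C' * M * φ r)
    (by simpa using hφ.const_mul (C' * M)) fun x y => ?_
  obtain ⟨γ, I, ⟨hγ, rfl, rfl⟩, hrect, hI, hIle⟩ := hcurve x y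
  calc dist (f (γ 0)) (f (γ 1)) ≤ C' * I :=
        dist_le_mul_of_isCurveIntegral hγ hrect hI hC' (fun _ _ => hw _) fun _ _ => hB' _
    _ ≤ C' * M * φ (dist (γ 0) (γ 1)) := by
        rw [mul_assoc]; exact mul_le_mul_of_nonneg_left hIle hC'

end

theorem bloch_extends_to_completion_general {X Y : Type*} [MetricSpace X] [MetricSpace Y]
    [CompleteSpace Y]
    (w : X → ℝ) (hwpos : ∀ x, 0 < w x)
    (φ : ℝ → ℝ) (hφ0 : φ 0 = 0) (hφc : ContinuousWithinAt φ (Set.Ici 0) 0)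
    (M : ℝ)
    (hcurve : ∀ x y : X, ∃ γ : ℝ → X, ∃ I : ℝ, IsCurveFrom γ x y ∧ RectifiableCurve γ ∧
      IsCurveIntegral γ w I ∧ I ≤ M * φ (dist x y))
    (f : X → Y) (C : ℝ)
    (hB : ∀ z, Dstar f z ≤ ENNReal.ofReal (C * w z)) :
    ∃ g : UniformSpace.Completion X → Y, Continuous g ∧ ∀ x : X, g x = f x := by
  have hφ : Tendsto φ (𝓝[≥] 0) (𝓝 0) := by simpa only [hφ0] using hφc.tendsto
  have hf : UniformContinuous f :=
    uniformContinuous_of_Dstar_le (fun x => (hwpos x).le) hB hφ hcurve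
  exact ⟨UniformSpace.Completion.extension f, UniformSpace.Completion.continuous_extension,
    UniformSpace.Completion.extension_coe hf⟩

theorem bloch_extends_to_completion {X Y : Type*} [MetricSpace X] [MetricSpace Y]
    [CompleteSpace Y]
    (w : X → ℝ) (hwc : Continuous w) (hwpos : ∀ x, 0 < w x)
    (φ : ℝ → ℝ) (hφ0 : φ 0 = 0) (hφc : ContinuousWithinAt φ (Set.Ici 0) 0)
    (hφnn : ∀ t ≥ (0:ℝ), 0 ≤ φ t)
    (M : ℝ) (hM : 0 < M)
    (hcurve : ∀ x y : X, ∃ γ : ℝ → X, ∃ I : ℝ, IsCurveFrom γ x y ∧ RectifiableCurve γ ∧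
      IsCurveIntegral γ w I ∧ I ≤ M * φ (dist x y))
    (f : X → Y) (C : ℝ)
    (hB : ∀ z, Dstar f z ≤ ENNReal.ofReal (C * w z)) :
    ∃ g : UniformSpace.Completion X → Y, Continuous g ∧ ∀ x : X, g x = f x :=
  bloch_extends_to_completion_general w hwpos φ hφ0 hφc M hcurve f C hB
end

section
/- Let X, Y be metric spaces, w a weight on X, K > 0, and φ ∈ C¹(0,∞) nonnegative on [0,∞), increasing, with φ(t)/t < A·φ'(t) for all t > 0 for some constant A > 0. If f ∈ RO^K_w(X,Y) satisfies d_Y(f(x),f(y)) ≤ C·φ(d_X(x,y)) for all x,y ∈ X, then D*f(z) ≤ A·K·C·φ'(w(z)) for every z ∈ X; i.e. ‖f‖_{B_{φ'∘w}} ≤ A·K·‖f‖_{Λ_φ}. -/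
open Set Filter Metric ENNReal NNReal

theorem ro_lipschitz_into_bloch {X Y : Type*} [MetricSpace X] [MetricSpace Y]
    (w : X → ℝ) (hwc : Continuous w) (hwpos : ∀ x, 0 < w x)
    (K A C : ℝ) (hK : 0 < K) (hA : 0 < A) (hC : 0 ≤ C)
    (φ φ' : ℝ → ℝ) (hφnn : ∀ t ≥ (0:ℝ), 0 ≤ φ t)
    (hmono : MonotoneOn φ (Set.Ici 0))
    (hderiv : ∀ t > (0:ℝ), HasDerivAt φ (φ' t) t)
    (hφ'cont : ContinuousOn φ' (Set.Ioi 0))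
    (hAφ : ∀ t > (0:ℝ), φ t / t < A * φ' t)
    (f : X → Y) (hf : RegOsc w K f)
    (hΛ : ∀ x y, dist (f x) (f y) ≤ C * φ (dist x y)) :
    ∀ z, Dstar f z ≤ ENNReal.ofReal (A * K * C * φ' (w z)) := by
  intro z
  have hwz := hwpos z
  have key : ∀ r : ℝ, 0 < r → r < w z →
      Dstar f z ≤ ENNReal.ofReal (A * K * C * φ' r) := by
    intro r hr hrw
    refine (hf.2.2 z r hr hrw).trans (ENNReal.ofReal_le_ofReal ?_)
    have hne : Nonempty (Metric.ball z r) := ⟨⟨z, Metric.mem_ball_self hr⟩⟩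
    have hS : (⨆ y : Metric.ball z r, dist (f z) (f y)) ≤ C * φ r := by
      refine ciSup_le fun y => (hΛ z y).trans ?_
      have hd : dist z (y : X) ≤ r := by
        have := y.2
        rw [Metric.mem_ball, dist_comm] at this
        exact this.le
      exact mul_le_mul_of_nonneg_left
        (hmono (Set.mem_Ici.2 dist_nonneg) (Set.mem_Ici.2 hr.le) hd) hC
    calc K / r * (⨆ y : Metric.ball z r, dist (f z) (f y))
        ≤ K / r * (C * φ r) := by
          exact mul_le_mul_of_nonneg_left hS (by positivity)
      _ = K * C * (φ r / r) := by ring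
      _ ≤ K * C * (A * φ' r) := by
          exact mul_le_mul_of_nonneg_left (hAφ r hr).le (by positivity)
      _ = A * K * C * φ' r := by ring
  have hcont : ContinuousAt φ' (w z) := hφ'cont.continuousAt (Ioi_mem_nhds hwz)
  have htend : Filter.Tendsto (fun r => ENNReal.ofReal (A * K * C * φ' r))
      (nhdsWithin (w z) (Set.Iio (w z))) (nhds (ENNReal.ofReal (A * K * C * φ' (w z)))) := by
    exact (ENNReal.tendsto_ofReal ((hcont.tendsto.const_mul _))).mono_left
      nhdsWithin_le_nhds
  refine ge_of_tendsto htend ?_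
  filter_upwards [(eventually_gt_nhds hwz).filter_mono nhdsWithin_le_nhds,
    self_mem_nhdsWithin] with r hr hrw
  exact key r hr hrw
end

section
/- Let X and Y be complex normed spaces, α ∈ (0,1), and f an analytic mapping on the open unit ball B(0,1) ⊆ X with values in Y which is bounded on every ball B(z,r) with 0 < r < 1 − ‖z‖. Then ‖Df(z)‖ ≤ C_f·(1 − ‖z‖)^{α−1} for all z ∈ B(0,1) if and only if ‖f(z) − f(w)‖ ≤ C'_f·‖z − w‖^α for all z, w ∈ B(0,1), with C'_f ≤ (4/α)·C_f and C_f ≤ (2/α)·C'_f. -/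
/-!
Write `δ = ‖z - w‖`. If `δ < 1`, go from `z` to `w` through `(1 - δ) • z` and `(1 - δ) • w`:
along each radius the derivative bound integrates to `(C / α) δ ^ α`, and the segment between
the two shrunk points lies in the ball of radius `1 - δ`, where `‖Df‖ ≤ C δ ^ (α - 1)`, so the
mean value theorem bounds that piece by `C δ ^ α`. If `δ ≥ 1`, go through `0` instead.
Conversely, the Hölder bound maps `B(z, 1 - ‖z‖)` into the closed ball of radius
`C' (1 - ‖z‖) ^ α` about `f z`, and the Schwarz lemma bounds `‖Df(z)‖` by the ratio of the radii.
-/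

open Set Metric

theorem rpow_one_sub_mul_sub_rpow_le {α c δ : ℝ} (hα0 : 0 ≤ α) (hα1 : α ≤ 1)
    (hc0 : 0 ≤ c) (hc1 : c ≤ 1) (hδ : 0 ≤ δ) :
    (1 - (1 - δ) * c) ^ α - (1 - c) ^ α ≤ δ ^ α := by
  have hsplit : 1 - (1 - δ) * c = (1 - c) + δ * c := by ring
  have hsub := Real.rpow_add_le_add_rpow (sub_nonneg.2 hc1) (mul_nonneg hδ hc0) hα0 hα1
  have hmono : (δ * c) ^ α ≤ δ ^ α :=
    Real.rpow_le_rpow (mul_nonneg hδ hc0) (mul_le_of_le_one_right hδ hc1) hα0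
  rw [hsplit]
  linarith

section HolderOfDerivBound

variable {X Y : Type*} [NormedAddCommGroup X] [NormedSpace ℝ X]
  [NormedAddCommGroup Y] [NormedSpace ℝ Y] {α C : ℝ} {f : X → Y} {f' : X → X →L[ℝ] Y}

theorem norm_image_sub_image_smul_le (hα : 0 < α)
    (hdiff : ∀ z ∈ ball (0:X) 1, HasFDerivAt f (f' z) z)
    (hC : ∀ z ∈ ball (0:X) 1, ‖f' z‖ ≤ C * (1 - ‖z‖) ^ (α - 1))
    {z : X} (hz : z ∈ ball (0:X) 1) {t : ℝ} (ht0 : 0 ≤ t) (ht1 : t ≤ 1) :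
    ‖f z - f (t • z)‖ ≤ C / α * ((1 - t * ‖z‖) ^ α - (1 - ‖z‖) ^ α) := by
  have hz1 : ‖z‖ < 1 := mem_ball_zero_iff.1 hz
  have hpos : ∀ s ∈ Icc t 1, 0 < 1 - s * ‖z‖ := fun s hs => by
    nlinarith [norm_nonneg z, hs.2]
  have hnorm : ∀ s ∈ Icc t 1, ‖s • z‖ = s * ‖z‖ := fun s hs => by
    rw [norm_smul, Real.norm_of_nonneg (ht0.trans hs.1)]
  have hmem : ∀ s ∈ Icc t 1, s • z ∈ ball (0:X) 1 := fun s hs => by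
    rw [mem_ball_zero_iff, hnorm s hs]
    linarith [hpos s hs]
  have hf : ∀ s ∈ Icc t 1,
      HasDerivAt (fun s : ℝ => f (s • z) - f (t • z)) (f' (s • z) z) s := fun s hs => by
    simpa using ((hdiff _ (hmem s hs)).comp_hasDerivAt s
      ((hasDerivAt_id s).smul_const z)).sub_const (f (t • z))
  have hB : ∀ s ∈ Icc t 1,
      HasDerivAt (fun s : ℝ => C / α * ((1 - t * ‖z‖) ^ α - (1 - s * ‖z‖) ^ α))
        (C * ‖z‖ * (1 - s * ‖z‖) ^ (α - 1)) s := fun s hs => by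
    have hinner : HasDerivAt (fun s : ℝ => 1 - s * ‖z‖) (-‖z‖) s := by
      simpa using ((hasDerivAt_id s).mul_const ‖z‖).const_sub 1
    refine ((((Real.hasDerivAt_rpow_const (p := α) (Or.inl (hpos s hs).ne')).comp s
      hinner).const_sub ((1 - t * ‖z‖) ^ α)).const_mul (C / α)).congr_deriv ?_
    field_simp
  have hbound : ∀ s ∈ Ico t 1, ‖f' (s • z) z‖ ≤ C * ‖z‖ * (1 - s * ‖z‖) ^ (α - 1) :=
    fun s hs => calc
      ‖f' (s • z) z‖ ≤ ‖f' (s • z)‖ * ‖z‖ := (f' (s • z)).le_opNorm z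
      _ ≤ C * (1 - ‖s • z‖) ^ (α - 1) * ‖z‖ := by
        gcongr
        exact hC _ (hmem s (Ico_subset_Icc_self hs))
      _ = C * ‖z‖ * (1 - s * ‖z‖) ^ (α - 1) := by
        rw [hnorm s (Ico_subset_Icc_self hs)]
        ring
  simpa using image_norm_le_of_norm_deriv_right_le_deriv_boundary'
    (fun s hs => (hf s hs).continuousAt.continuousWithinAt)
    (fun s hs => (hf s (Ico_subset_Icc_self hs)).hasDerivWithinAt) (by simp)
    (fun s hs => (hB s hs).continuousAt.continuousWithinAt)
    (fun s hs => (hB s (Ico_subset_Icc_self hs)).hasDerivWithinAt) hbound (right_mem_Icc.2 ht1)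

theorem norm_image_sub_image_one_sub_smul_le (hα0 : 0 < α) (hα1 : α ≤ 1) (hC0 : 0 ≤ C)
    (hdiff : ∀ z ∈ ball (0:X) 1, HasFDerivAt f (f' z) z)
    (hC : ∀ z ∈ ball (0:X) 1, ‖f' z‖ ≤ C * (1 - ‖z‖) ^ (α - 1))
    {z : X} (hz : z ∈ ball (0:X) 1) {δ : ℝ} (hδ0 : 0 ≤ δ) (hδ1 : δ ≤ 1) :
    ‖f z - f ((1 - δ) • z)‖ ≤ C / α * δ ^ α :=
  (norm_image_sub_image_smul_le hα0 hdiff hC hz (by linarith) (by linarith)).trans <| by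
    gcongr
    exact rpow_one_sub_mul_sub_rpow_le hα0.le hα1 (norm_nonneg z)
      (mem_ball_zero_iff.1 hz).le hδ0

theorem norm_image_sub_le_of_mem_closedBall (hα1 : α ≤ 1) (hC0 : 0 ≤ C)
    (hdiff : ∀ z ∈ ball (0:X) 1, HasFDerivAt f (f' z) z)
    (hC : ∀ z ∈ ball (0:X) 1, ‖f' z‖ ≤ C * (1 - ‖z‖) ^ (α - 1))
    {ρ : ℝ} (hρ : ρ < 1) {u v : X} (hu : u ∈ closedBall (0:X) ρ) (hv : v ∈ closedBall (0:X) ρ) :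
    ‖f u - f v‖ ≤ C * (1 - ρ) ^ (α - 1) * ‖u - v‖ := by
  have hsub : closedBall (0:X) ρ ⊆ ball 0 1 := closedBall_subset_ball hρ
  refine (convex_closedBall 0 ρ).norm_image_sub_le_of_norm_hasFDerivWithin_le
    (fun x hx => (hdiff x (hsub hx)).hasFDerivWithinAt) (fun x hx => ?_) hv hu
  refine (hC x (hsub hx)).trans ?_
  have hx : ‖x‖ ≤ ρ := mem_closedBall_zero_iff.1 hx
  gcongr ?_ * ?_
  exact Real.rpow_le_rpow_of_nonpos (by linarith) (by linarith) (by linarith)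

theorem norm_image_sub_le_of_norm_fderiv_le (hα0 : 0 < α) (hα1 : α ≤ 1) (hC0 : 0 ≤ C)
    (hdiff : ∀ z ∈ ball (0:X) 1, HasFDerivAt f (f' z) z)
    (hC : ∀ z ∈ ball (0:X) 1, ‖f' z‖ ≤ C * (1 - ‖z‖) ^ (α - 1))
    {z w : X} (hz : z ∈ ball (0:X) 1) (hw : w ∈ ball (0:X) 1) :
    ‖f z - f w‖ ≤ 3 / α * C * ‖z - w‖ ^ α := by
  obtain rfl | hzw := eq_or_ne z w
  · simp [Real.zero_rpow hα0.ne']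
  set δ := ‖z - w‖
  have hδ0 : 0 < δ := norm_pos_iff.2 (sub_ne_zero.2 hzw)
  have hradial {u : X} (hu : u ∈ ball (0:X) 1) {s : ℝ} (hs0 : 0 ≤ s) (hs1 : s ≤ 1) :=
    norm_image_sub_image_one_sub_smul_le hα0 hα1 hC0 hdiff hC hu hs0 hs1
  rcases le_or_gt 1 δ with hfar | hnear
  · have hz0 := hradial hz zero_le_one le_rfl
    have hw0 := hradial hw zero_le_one le_rfl
    simp only [sub_self, zero_smul, Real.one_rpow, mul_one] at hz0 hw0
    have hδα : 1 ≤ δ ^ α := Real.one_le_rpow hfar hα0.le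
    calc ‖f z - f w‖ ≤ ‖f z - f 0‖ + ‖f w - f 0‖ := by
          simpa only [dist_eq_norm] using dist_triangle_right (f z) (f w) (f 0)
      _ ≤ C / α + C / α := add_le_add hz0 hw0
      _ ≤ 3 / α * C * δ ^ α := by
        rw [div_mul_eq_mul_div, mul_div_assoc]
        nlinarith [div_nonneg hC0 hα0.le]
  · set t := 1 - δ
    have hsmul : ∀ u ∈ ball (0:X) 1, t • u ∈ closedBall (0:X) t := fun u hu => by
      rw [mem_closedBall_zero_iff, norm_smul, Real.norm_of_nonneg (by linarith)]
      exact mul_le_of_le_one_right (by linarith) (mem_ball_zero_iff.1 hu).le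
    have hmid := norm_image_sub_le_of_mem_closedBall hα1 hC0 hdiff hC (by linarith)
      (hsmul z hz) (hsmul w hw)
    rw [← smul_sub, norm_smul, Real.norm_of_nonneg (by linarith), sub_sub_cancel,
      Real.rpow_sub_one hδ0.ne'] at hmid
    have hCδ : C * (δ ^ α / δ) * (t * δ) ≤ C / α * δ ^ α := by
      have hCt : C * t ≤ C / α :=
        (mul_le_of_le_one_right hC0 (by linarith)).trans (le_div_self hC0 hα0 hα1)
      calc C * (δ ^ α / δ) * (t * δ) = C * t * δ ^ α := by field_simp
        _ ≤ C / α * δ ^ α := by gcongr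
    calc ‖f z - f w‖ ≤ ‖f z - f (t • z)‖ + ‖f (t • z) - f (t • w)‖ + ‖f (t • w) - f w‖ := by
          simpa only [dist_eq_norm] using dist_triangle4 (f z) (f (t • z)) (f (t • w)) (f w)
      _ ≤ C / α * δ ^ α + C / α * δ ^ α + C / α * δ ^ α := by
        gcongr
        · exact hradial hz hδ0.le hnear.le
        · exact hmid.trans hCδ
        · exact norm_sub_rev (f (t • w)) (f w) ▸ hradial hw hδ0.le hnear.le
      _ = 3 / α * C * δ ^ α := by ring

end HolderOfDerivBound

theorem norm_fderiv_le_of_holder {X Y : Type*} [NormedAddCommGroup X] [NormedSpace ℂ X]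
    [NormedAddCommGroup Y] [NormedSpace ℂ Y] {α C : ℝ} {f : X → Y} {f' : X → X →L[ℂ] Y}
    (hα : 0 ≤ α) (hC0 : 0 ≤ C) (hdiff : ∀ z ∈ ball (0:X) 1, HasFDerivAt f (f' z) z)
    (hH : ∀ z ∈ ball (0:X) 1, ∀ w ∈ ball (0:X) 1, ‖f z - f w‖ ≤ C * ‖z - w‖ ^ α)
    {z : X} (hz : z ∈ ball (0:X) 1) :
    ‖f' z‖ ≤ C * (1 - ‖z‖) ^ (α - 1) := by
  have hr : 0 < 1 - ‖z‖ := sub_pos.2 (mem_ball_zero_iff.1 hz)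
  have hball : ball z (1 - ‖z‖) ⊆ ball 0 1 := ball_subset_ball' (by simp)
  have hmaps : MapsTo f (ball z (1 - ‖z‖)) (closedBall (f z) (C * (1 - ‖z‖) ^ α)) :=
    fun u hu => by
      rw [mem_closedBall, dist_eq_norm]
      calc ‖f u - f z‖ ≤ C * ‖u - z‖ ^ α := hH u (hball hu) z hz
        _ ≤ C * (1 - ‖z‖) ^ α := by gcongr; exact (mem_ball_iff_norm.1 hu).le
  have hschwarz := Complex.norm_fderiv_le_div_of_mapsTo_ball
    (fun u hu => (hdiff u (hball hu)).differentiableAt.differentiableWithinAt) hmaps hr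
  rwa [(hdiff z hz).fderiv, mul_div_assoc, ← Real.rpow_sub_one hr.ne'] at hschwarz

theorem hardy_littlewood_normed_spaces_general
    {X Y : Type*} [NormedAddCommGroup X] [NormedSpace ℂ X]
    [NormedAddCommGroup Y] [NormedSpace ℂ Y]
    (α : ℝ) (hα : α ∈ Set.Ioo (0:ℝ) 1)
    (f : X → Y) (f' : X → X →L[ℂ] Y)
    (hdiff : ∀ z ∈ Metric.ball (0:X) 1, HasFDerivAt f (f' z) z) :
    (∀ C : ℝ, 0 ≤ C →
      (∀ z ∈ Metric.ball (0:X) 1, ‖f' z‖ ≤ C * (1 - ‖z‖) ^ (α - 1)) →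
      ∀ z ∈ Metric.ball (0:X) 1, ∀ w ∈ Metric.ball (0:X) 1,
        ‖f z - f w‖ ≤ (4 / α) * C * ‖z - w‖ ^ α) ∧
    (∀ C' : ℝ, 0 ≤ C' →
      (∀ z ∈ Metric.ball (0:X) 1, ∀ w ∈ Metric.ball (0:X) 1,
        ‖f z - f w‖ ≤ C' * ‖z - w‖ ^ α) →
      ∀ z ∈ Metric.ball (0:X) 1, ‖f' z‖ ≤ (2 / α) * C' * (1 - ‖z‖) ^ (α - 1)) := by
  obtain ⟨hα0, hα1⟩ := hα
  refine ⟨fun C hC0 hC z hz w hw => ?_, fun C' hC'0 hH z hz => ?_⟩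
  · calc ‖f z - f w‖ ≤ 3 / α * C * ‖z - w‖ ^ α :=
          norm_image_sub_le_of_norm_fderiv_le (f' := fun z => (f' z).restrictScalars ℝ)
            hα0 hα1.le hC0 (fun u hu => (hdiff u hu).restrictScalars ℝ)
            (fun u hu => by simpa using hC u hu) hz hw
      _ ≤ 4 / α * C * ‖z - w‖ ^ α := by gcongr; norm_num
  · calc ‖f' z‖ ≤ C' * (1 - ‖z‖) ^ (α - 1) := norm_fderiv_le_of_holder hα0.le hC'0 hdiff hH hz
      _ ≤ 2 / α * C' * (1 - ‖z‖) ^ (α - 1) := by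
        have hα2 : 1 ≤ 2 / α := by rw [le_div_iff₀ hα0]; linarith
        exact mul_le_mul_of_nonneg_right (le_mul_of_one_le_left hC'0 hα2)
          (Real.rpow_nonneg (sub_nonneg.2 (mem_ball_zero_iff.1 hz).le) _)

theorem hardy_littlewood_normed_spaces
    {X Y : Type*} [NormedAddCommGroup X] [NormedSpace ℂ X]
    [NormedAddCommGroup Y] [NormedSpace ℂ Y]
    (α : ℝ) (hα : α ∈ Set.Ioo (0:ℝ) 1)
    (f : X → Y) (f' : X → X →L[ℂ] Y)
    (hdiff : ∀ z ∈ Metric.ball (0:X) 1, HasFDerivAt f (f' z) z)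
    (hbd : ∀ z ∈ Metric.ball (0:X) 1, ∀ r : ℝ, 0 < r → r < 1 - ‖z‖ →
      Bornology.IsBounded (f '' Metric.ball z r)) :
    (∀ C : ℝ, 0 ≤ C →
      (∀ z ∈ Metric.ball (0:X) 1, ‖f' z‖ ≤ C * (1 - ‖z‖) ^ (α - 1)) →
      ∀ z ∈ Metric.ball (0:X) 1, ∀ w ∈ Metric.ball (0:X) 1,
        ‖f z - f w‖ ≤ (4 / α) * C * ‖z - w‖ ^ α) ∧
    (∀ C' : ℝ, 0 ≤ C' →
      (∀ z ∈ Metric.ball (0:X) 1, ∀ w ∈ Metric.ball (0:X) 1,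
        ‖f z - f w‖ ≤ C' * ‖z - w‖ ^ α) →
      ∀ z ∈ Metric.ball (0:X) 1, ‖f' z‖ ≤ (2 / α) * C' * (1 - ‖z‖) ^ (α - 1)) :=
  hardy_littlewood_normed_spaces_general α hα f f' hdiff
end

section
/- Let X be a metric space, w a weight on X, Y a metric space, f ∈ RO^K_w(X,Y) with d_Y(f(x),f(y)) ≤ C·φ(d_X(x,y)) for a function φ ∈ C[0,∞), C¹ on (0,∞), with φ(0)=0 and φ' > 0 on (0,∞). Then the quotient Q(z) = D*f(z)/φ'(w(z)) is bounded on every compact subset of X. -/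
open Set Filter Metric ENNReal NNReal

theorem quotient_bounded_on_compacts {X Y : Type*} [MetricSpace X] [MetricSpace Y]
    (w : X → ℝ) (hwc : Continuous w) (hwpos : ∀ x, 0 < w x)
    (φ φ' : ℝ → ℝ) (hφcont : ContinuousOn φ (Set.Ici 0)) (hφ0 : φ 0 = 0)
    (hderiv : ∀ t > (0:ℝ), HasDerivAt φ (φ' t) t)
    (hφ'cont : ContinuousOn φ' (Set.Ioi 0))
    (hφ'pos : ∀ t > (0:ℝ), 0 < φ' t)
    (κ : ℝ) (hκ : 0 < κ) (f : X → Y) (hf : RegOsc w κ f)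
    (C : ℝ) (hΛ : ∀ x y, dist (f x) (f y) ≤ C * φ (dist x y)) :
    ∀ K₁ : Set X, IsCompact K₁ →
      ∃ B : ℝ, ∀ z ∈ K₁, (Dstar f z).toReal / φ' (w z) ≤ B := by
  intro K₁ hK₁
  rcases K₁.eq_empty_or_nonempty with h | hne
  · exact ⟨0, by simp [h]⟩
  -- minimum of w on K₁
  obtain ⟨z₀, hz₀K, hz₀min⟩ := hK₁.exists_isMinOn hne hwc.continuousOn
  set δ := w z₀ with hδ
  have hδpos : 0 < δ := hwpos z₀
  set r := δ / 2 with hr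
  have hrpos : 0 < r := by positivity
  have hrlt : ∀ z ∈ K₁, r < w z := fun z hz => lt_of_lt_of_le (by linarith) (hz₀min hz)
  -- minimum of φ' ∘ w on K₁
  have hcontφ'w : ContinuousOn (fun z => φ' (w z)) K₁ := by
    apply (hφ'cont.comp hwc.continuousOn)
    intro z hz
    exact hwpos z
  obtain ⟨z₁, hz₁K, hz₁min⟩ := hK₁.exists_isMinOn hne hcontφ'w
  set m := φ' (w z₁) with hm
  have hmpos : 0 < m := hφ'pos _ (hwpos z₁)
  -- max of |φ| on [0, r]
  obtain ⟨t₀, ht₀mem, ht₀max⟩ := (isCompact_Icc (a := (0:ℝ)) (b := r)).exists_isMaxOn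
    (nonempty_Icc.mpr hrpos.le)
    ((hφcont.mono (Icc_subset_Ici_self)).abs)
  set M := |φ t₀| with hM
  have hMnonneg : 0 ≤ M := abs_nonneg _
  set A := (κ / r) * (|C| * M) with hA
  have hAnonneg : 0 ≤ A := by positivity
  refine ⟨A / m, fun z hz => ?_⟩
  -- bound the sup over the ball
  have hzball : z ∈ Metric.ball z r := Metric.mem_ball_self hrpos
  have hsup : (⨆ y : Metric.ball z r, dist (f z) (f y)) ≤ |C| * M := by
    have : Nonempty (Metric.ball z r) := ⟨⟨z, hzball⟩⟩
    refine ciSup_le fun ⟨y, hy⟩ => ?_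
    have h1 : dist (f z) (f y) ≤ C * φ (dist z y) := hΛ z y
    have h2 : dist z y ∈ Set.Icc (0:ℝ) r :=
      ⟨dist_nonneg, (Metric.mem_ball'.mp hy).le⟩
    have h3 : |φ (dist z y)| ≤ M := ht₀max h2
    calc dist (f z) (f y) ≤ C * φ (dist z y) := h1
      _ ≤ |C * φ (dist z y)| := le_abs_self _
      _ = |C| * |φ (dist z y)| := abs_mul _ _
      _ ≤ |C| * M := by
          exact mul_le_mul_of_nonneg_left h3 (abs_nonneg C)
  have hD : Dstar f z ≤ ENNReal.ofReal A := by
    refine le_trans (hf.2.2 z r hrpos (hrlt z hz)) ?_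
    apply ENNReal.ofReal_le_ofReal
    rw [hA]
    exact mul_le_mul_of_nonneg_left hsup (by positivity)
  have hDreal : (Dstar f z).toReal ≤ A := by
    have := ENNReal.toReal_mono ENNReal.ofReal_ne_top hD
    rwa [ENNReal.toReal_ofReal hAnonneg] at this
  have hmle : m ≤ φ' (w z) := hz₁min hz
  calc (Dstar f z).toReal / φ' (w z) ≤ A / m :=
        div_le_div₀ hAnonneg hDreal hmpos hmle
    _ = A / m := rfl
end
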